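/- arXiv:1603.03918 — 2 statements merged into one kernel-verified Lean document; each statement's English description precedes it below -/
import Mathlib

section
/- Let (A, G, α, u) be a twisted C*-dynamical system with G discrete, u(s⁻¹, s) = 1 for all s ∈ G, and F ⊆ G a finite set. Define ψ : A ⊗ M_F(ℂ) → A ⋊_{(α,u),r} G on elementary tensors by ψ(a ⊗ e_{p,q}) = (1/|F|) π_α(α_p(a) u(p, q⁻¹)) λ_u(p q⁻¹). Then for any family (a_p)_{p ∈ F} in A, ψ(Σ_{p,q ∈ F} a_p* a_q ⊗ e_{p,q}) = (1/|F|) (Σ_{p ∈ F} π_α(a_p) λ_u(p⁻¹))* (Σ_{q ∈ F} π_α(a_q) λ_u(q⁻¹)); in particular ψ maps positive elements to positive elements. -/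
/-!
Expanding `star (∑ p, π(a p) Λ(p⁻¹)) * ∑ q, π(a q) Λ(q⁻¹)` term by term and moving every `Λ`
to the right with the covariance relations gives exactly the image under `ψ` of
`∑ p q, a p* a q ⊗ e_{p,q}`; and `c • (star S * S) = star (√c • S) * (√c • S)` for `c ≥ 0`.
-/

open Finset

structure TwistedCovariantPair {A G R : Type*} [Mul A] [Star A] [Group G] [Mul R] [Star R]
    (α : G → A → A) (u : G → G → A) (π : A → R) (Λ : G → R) : Prop where
  π_mul : ∀ x y, π (x * y) = π x * π y
  π_star : ∀ x, π (star x) = star (π x)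
  Λ_mul_π : ∀ s x, Λ s * π x = π (α s x) * Λ s
  Λ_mul_Λ : ∀ s t, Λ s * Λ t = π (u s t) * Λ (s * t)
  star_Λ : ∀ s, star (Λ s) = Λ s⁻¹

namespace TwistedCovariantPair

variable {A G R : Type*} [Mul A] [Star A] [Group G]
  {α : G → A → A} {u : G → G → A} {π : A → R} {Λ : G → R}

theorem star_mul_mul [Semigroup R] [StarMul R] (h : TwistedCovariantPair α u π Λ)
    (x y : A) (p q : G) :
    star (π x * Λ p⁻¹) * (π y * Λ q⁻¹) = π (α p (star x * y) * u p q⁻¹) * Λ (p * q⁻¹) := by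
  rw [star_mul, h.star_Λ, inv_inv, ← h.π_star, mul_assoc, ← mul_assoc (π (star x)), ← h.π_mul,
    ← mul_assoc, h.Λ_mul_π, mul_assoc, h.Λ_mul_Λ, ← mul_assoc, ← h.π_mul]

theorem star_sum_mul_sum [NonUnitalSemiring R] [StarRing R] (h : TwistedCovariantPair α u π Λ)
    (F : Finset G) (a : G → A) :
    star (∑ p ∈ F, π (a p) * Λ p⁻¹) * ∑ q ∈ F, π (a q) * Λ q⁻¹
      = ∑ p ∈ F, ∑ q ∈ F, π (α p (star (a p) * a q) * u p q⁻¹) * Λ (p * q⁻¹) := by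
  simp only [star_sum, sum_mul_sum, h.star_mul_mul]

end TwistedCovariantPair

theorem ofReal_smul_star_mul_self {R : Type*} [NonUnitalSemiring R] [StarRing R] [Module ℂ R]
    [StarModule ℂ R] [IsScalarTower ℂ R R] [SMulCommClass ℂ R R] {r : ℝ} (hr : 0 ≤ r) (S : R) :
    (r : ℂ) • (star S * S) = star ((Real.sqrt r : ℂ) • S) * ((Real.sqrt r : ℂ) • S) := by
  rw [star_smul, smul_mul_smul_comm, Complex.star_def, Complex.conj_ofReal, ← Complex.ofReal_mul,
    Real.mul_self_sqrt hr]

section Diagonal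

variable {ι A H : Type*} [Semiring A] [Algebra ℂ A] [Star A]
  [NormedAddCommGroup H] [InnerProductSpace ℂ H] [CompleteSpace H]
  {σ : ι → A →⋆ₐ[ℂ] (H →L[ℂ] H)} {π : A → (lp (fun _ : ι => H) 2 →L[ℂ] lp (fun _ : ι => H) 2)}

theorem diagonal_mul (hπ : ∀ x ξ l, π x ξ l = σ l x (ξ l)) (x y : A) :
    π (x * y) = π x * π y :=
  ContinuousLinearMap.ext fun ξ => lp.ext <| funext fun l => by
    rw [mul_apply_eq_comp, hπ, hπ, hπ, map_mul, mul_apply_eq_comp]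

theorem diagonal_one (hπ : ∀ x ξ l, π x ξ l = σ l x (ξ l)) : π 1 = 1 :=
  ContinuousLinearMap.ext fun ξ => lp.ext <| funext fun l => by
    rw [hπ, map_one]; rfl

theorem diagonal_star (hπ : ∀ x ξ l, π x ξ l = σ l x (ξ l)) (x : A) :
    π (star x) = star (π x) := by
  rw [ContinuousLinearMap.star_eq_adjoint, ContinuousLinearMap.eq_adjoint_iff]
  intro ξ η
  rw [lp.inner_eq_tsum, lp.inner_eq_tsum]
  refine tsum_congr fun l => ?_
  rw [hπ, hπ, map_star, ContinuousLinearMap.star_eq_adjoint,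
    ContinuousLinearMap.adjoint_inner_left]

end Diagonal

section Regular

variable {A G H : Type*} [CStarAlgebra A] [Group G]
  [NormedAddCommGroup H] [InnerProductSpace ℂ H] [CompleteSpace H]
  {ρ : A →⋆ₐ[ℂ] (H →L[ℂ] H)} {α : G → (A ≃⋆ₐ[ℂ] A)} {u : G → G → A}
  {π : A → (lp (fun _ : G => H) 2 →L[ℂ] lp (fun _ : G => H) 2)}
  {Λ : G → (lp (fun _ : G => H) 2 →L[ℂ] lp (fun _ : G => H) 2)}

theorem regular_Λ_mul_π (hu : ∀ s t, u s t ∈ unitary A)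
    (hcov : ∀ s t a, α s (α t a) = u s t * α (s * t) a * star (u s t))
    (hπ : ∀ x ξ l, π x ξ l = ρ (α l⁻¹ x) (ξ l))
    (hΛ : ∀ s ξ l, Λ s ξ l = ρ (u l⁻¹ s) (ξ (s⁻¹ * l))) (s : G) (x : A) :
    Λ s * π x = π (α s x) * Λ s :=
  ContinuousLinearMap.ext fun ξ => lp.ext <| funext fun l => by
    rw [mul_apply_eq_comp, mul_apply_eq_comp, hΛ, hπ, hπ, hΛ,
      ← mul_apply_eq_comp, ← map_mul, ← mul_apply_eq_comp, ← map_mul,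
      mul_inv_rev, inv_inv, hcov l⁻¹ s x, mul_assoc, mul_assoc,
      (Unitary.mem_iff.mp (hu l⁻¹ s)).1, mul_one]

theorem regular_Λ_mul_Λ (hcoc : ∀ r s t, α r (u s t) * u r (s * t) = u r s * u (r * s) t)
    (hπ : ∀ x ξ l, π x ξ l = ρ (α l⁻¹ x) (ξ l))
    (hΛ : ∀ s ξ l, Λ s ξ l = ρ (u l⁻¹ s) (ξ (s⁻¹ * l))) (s t : G) :
    Λ s * Λ t = π (u s t) * Λ (s * t) :=
  ContinuousLinearMap.ext fun ξ => lp.ext <| funext fun l => by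
    rw [mul_apply_eq_comp, mul_apply_eq_comp, hΛ, hΛ, hπ, hΛ,
      ← mul_apply_eq_comp, ← map_mul, ← mul_apply_eq_comp, ← map_mul,
      mul_inv_rev, inv_inv, hcoc l⁻¹ s t, mul_inv_rev, mul_assoc]

theorem regular_Λ_one (hone : ∀ s, u s 1 = 1)
    (hΛ : ∀ s ξ l, Λ s ξ l = ρ (u l⁻¹ s) (ξ (s⁻¹ * l))) : Λ 1 = 1 :=
  ContinuousLinearMap.ext fun ξ => lp.ext <| funext fun l => by
    rw [hΛ, hone, map_one, inv_one, one_mul]; rfl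

theorem TwistedCovariantPair.regular (hu : ∀ s t, u s t ∈ unitary A)
    (hcov : ∀ s t a, α s (α t a) = u s t * α (s * t) a * star (u s t))
    (hcoc : ∀ r s t, α r (u s t) * u r (s * t) = u r s * u (r * s) t)
    (hone : ∀ s, u s 1 = 1) (hu1 : ∀ s, u s⁻¹ s = 1)
    (hπ : ∀ x ξ l, π x ξ l = ρ (α l⁻¹ x) (ξ l))
    (hΛ : ∀ s ξ l, Λ s ξ l = ρ (u l⁻¹ s) (ξ (s⁻¹ * l)))
    (hΛunit : ∀ s, Λ s ∈ unitary (lp (fun _ : G => H) 2 →L[ℂ] lp (fun _ : G => H) 2)) :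
    TwistedCovariantPair (fun s x => α s x) u π Λ where
  π_mul := diagonal_mul (σ := fun l => ρ.comp (α l⁻¹).toStarAlgHom) hπ
  π_star := diagonal_star (σ := fun l => ρ.comp (α l⁻¹).toStarAlgHom) hπ
  Λ_mul_π := regular_Λ_mul_π hu hcov hπ hΛ
  Λ_mul_Λ := regular_Λ_mul_Λ hcoc hπ hΛ
  star_Λ s := by
    -- `u s⁻¹ s = 1` makes `Λ s⁻¹` a left inverse of the unitary `Λ s`.
    refine (left_inv_eq_right_inv ?_ (Unitary.mem_iff.mp (hΛunit s)).2).symm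
    rw [regular_Λ_mul_Λ hcoc hπ hΛ, hu1, inv_mul_cancel, regular_Λ_one hone hΛ,
      diagonal_one (σ := fun l => ρ.comp (α l⁻¹).toStarAlgHom) hπ, one_mul]

end Regular

theorem stmt5_general {A : Type*} [CStarAlgebra A] {G : Type*} [Group G]
    {H₀ : Type*} [NormedAddCommGroup H₀] [InnerProductSpace ℂ H₀] [CompleteSpace H₀]
    (ρ : A →⋆ₐ[ℂ] (H₀ →L[ℂ] H₀))
    (α : G → (A ≃⋆ₐ[ℂ] A)) (u : G → G → A)
    (hu : ∀ s t : G, u s t ∈ unitary A)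
    (hcov : ∀ s t : G, ∀ a : A, α s (α t a) = u s t * α (s * t) a * star (u s t))
    (hcoc : ∀ r s t : G, α r (u s t) * u r (s * t) = u r s * u (r * s) t)
    (hone : ∀ s : G, u 1 s = 1 ∧ u s 1 = 1)
    (π : A → (lp (fun _ : G => H₀) 2 →L[ℂ] lp (fun _ : G => H₀) 2))
    (Λu : G → (lp (fun _ : G => H₀) 2 →L[ℂ] lp (fun _ : G => H₀) 2))
    (hπ : ∀ (x : A) (ξ : lp (fun _ : G => H₀) 2) (l : G),
      (π x ξ) l = ρ (α l⁻¹ x) (ξ l))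
    (hLam : ∀ (s : G) (ξ : lp (fun _ : G => H₀) 2) (l : G),
      (Λu s ξ) l = ρ (u l⁻¹ s) (ξ (s⁻¹ * l)))
    (hΛunit : ∀ s : G, Λu s ∈ unitary (lp (fun _ : G => H₀) 2 →L[ℂ] lp (fun _ : G => H₀) 2))
    (hu1 : ∀ s : G, u s⁻¹ s = 1)
    (F : Finset G) (a : G → A) :
    (∑ p ∈ F, ∑ q ∈ F, ((F.card : ℂ))⁻¹ •
        (π (α p (star (a p) * a q) * u p q⁻¹) * Λu (p * q⁻¹)))
      = ((F.card : ℂ))⁻¹ •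
        (star (∑ p ∈ F, π (a p) * Λu p⁻¹) * ∑ q ∈ F, π (a q) * Λu q⁻¹) ∧
    ∃ y : lp (fun _ : G => H₀) 2 →L[ℂ] lp (fun _ : G => H₀) 2,
      (∑ p ∈ F, ∑ q ∈ F, ((F.card : ℂ))⁻¹ •
        (π (α p (star (a p) * a q) * u p q⁻¹) * Λu (p * q⁻¹))) = star y * y := by
  have hpair := TwistedCovariantPair.regular hu hcov hcoc (fun s => (hone s).2) hu1 hπ hLam hΛunit
  simp only [← smul_sum, ← hpair.star_sum_mul_sum F a, true_and]
  have hcard : ((F.card : ℂ))⁻¹ = (((F.card : ℝ)⁻¹ : ℝ) : ℂ) := by push_cast; rfl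
  rw [hcard]
  exact ⟨_, ofReal_smul_star_mul_self (by positivity) _⟩

/-- Let `(A, G, α, u)` be a twisted C*-dynamical system with `u(s⁻¹,s) = 1`, realized on
`ℓ²(G, H₀)` via the regular covariant pair `(π, Λu)`, and `F ⊆ G` a nonempty finite set.
The map `ψ : A ⊗ M_F(ℂ) → A ⋊_{(α,u),r} G`, `ψ(a ⊗ e_{p,q}) = (1/|F|) π(α_p(a) u(p,q⁻¹))
Λu(pq⁻¹)`, applied (by linearity) to `Σ_{p,q ∈ F} a_p* a_q ⊗ e_{p,q}` yields
`(1/|F|) (Σ_p π(a_p) Λu(p⁻¹))* (Σ_q π(a_q) Λu(q⁻¹))`; in particular the image is a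
positive operator. -/
theorem stmt5 {A : Type*} [CStarAlgebra A] {G : Type*} [Group G] [DecidableEq G]
    {H₀ : Type*} [NormedAddCommGroup H₀] [InnerProductSpace ℂ H₀] [CompleteSpace H₀]
    (ρ : A →⋆ₐ[ℂ] (H₀ →L[ℂ] H₀)) (hρ : Function.Injective ρ)
    (α : G → (A ≃⋆ₐ[ℂ] A)) (u : G → G → A)
    (hu : ∀ s t : G, u s t ∈ unitary A)
    (hcov : ∀ s t : G, ∀ a : A, α s (α t a) = u s t * α (s * t) a * star (u s t))
    (hcoc : ∀ r s t : G, α r (u s t) * u r (s * t) = u r s * u (r * s) t)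
    (hone : ∀ s : G, u 1 s = 1 ∧ u s 1 = 1)
    (π : A → (lp (fun _ : G => H₀) 2 →L[ℂ] lp (fun _ : G => H₀) 2))
    (Λu : G → (lp (fun _ : G => H₀) 2 →L[ℂ] lp (fun _ : G => H₀) 2))
    (hπ : ∀ (x : A) (ξ : lp (fun _ : G => H₀) 2) (l : G),
      (π x ξ) l = ρ (α l⁻¹ x) (ξ l))
    (hLam : ∀ (s : G) (ξ : lp (fun _ : G => H₀) 2) (l : G),
      (Λu s ξ) l = ρ (u l⁻¹ s) (ξ (s⁻¹ * l)))
    (hΛunit : ∀ s : G, Λu s ∈ unitary (lp (fun _ : G => H₀) 2 →L[ℂ] lp (fun _ : G => H₀) 2))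
    (hu1 : ∀ s : G, u s⁻¹ s = 1)
    (F : Finset G) (hF : F.Nonempty) (a : G → A) :
    (∑ p ∈ F, ∑ q ∈ F, ((F.card : ℂ))⁻¹ •
        (π (α p (star (a p) * a q) * u p q⁻¹) * Λu (p * q⁻¹)))
      = ((F.card : ℂ))⁻¹ •
        (star (∑ p ∈ F, π (a p) * Λu p⁻¹) * ∑ q ∈ F, π (a q) * Λu q⁻¹) ∧
    ∃ y : lp (fun _ : G => H₀) 2 →L[ℂ] lp (fun _ : G => H₀) 2,
      (∑ p ∈ F, ∑ q ∈ F, ((F.card : ℂ))⁻¹ •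
        (π (α p (star (a p) * a q) * u p q⁻¹) * Λu (p * q⁻¹))) = star y * y :=
  stmt5_general ρ α u hu hcov hcoc hone π Λu hπ hLam hΛunit hu1 F a
end

section
/- Let (A, G, α, u) be a twisted C*-dynamical system with G discrete and u(s⁻¹, s) = 1 for all s ∈ G, and let F ⊆ G be a finite set. Let φ : A ⋊_{(α,u),r} G → A ⊗ M_F(ℂ) be the compression φ(x) = (1⊗P) x (1⊗P), where P projects ℓ²(G) onto span{δ_g : g ∈ F}, and let ψ : A ⊗ M_F(ℂ) → A ⋊_{(α,u),r} G be given by ψ(a ⊗ e_{p,q}) = (1/|F|) π_α(α_p(a) u(p,q⁻¹)) λ_u(pq⁻¹). Then for every a ∈ A and s ∈ G: ψ(φ(π_α(a) λ_u(s))) = (|F ∩ sF| / |F|) · π_α(a) λ_u(s). -/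
/-!
Every summand of `ψ(φ(π(a)λ(s)))` is `|F|⁻¹ π(a)λ(s)`: the group element is
`p (s⁻¹p)⁻¹ = s`, and the coefficient `α_p(α_{p⁻¹}(a) u(p⁻¹,s)) u(p,p⁻¹s)` collapses to `a`
because the normalisation `u(p⁻¹,p) = 1` forces, via the cocycle identity, `u(p,p⁻¹) = 1`,
hence `α_p ∘ α_{p⁻¹} = id` and `α_p(u(p⁻¹,s)) u(p,p⁻¹s) = u(1,s) = 1`.
-/

section TwistedAction

variable {R A G : Type*} [Group G] [Semiring A] [StarMul A] [SMul R A]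
  {α : G → A ≃⋆ₐ[R] A} {u : G → G → A}

theorem twistedAction_one_apply
    (hcov : ∀ s t : G, ∀ a : A, α s (α t a) = u s t * α (s * t) a * star (u s t))
    (hu₁₁ : u 1 1 = 1) (a : A) : α 1 a = a := by
  have h := hcov 1 1 a
  simp only [hu₁₁, mul_one, one_mul, star_one] at h
  exact (α 1).injective h

theorem cocycle_mul_inv_eq_one
    (hcoc : ∀ r s t : G, α r (u s t) * u r (s * t) = u r s * u (r * s) t)
    (hone : ∀ s : G, u 1 s = 1 ∧ u s 1 = 1) (hu1 : ∀ s : G, u s⁻¹ s = 1) (p : G) :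
    u p p⁻¹ = 1 := by
  simpa [hu1, (hone p).1, (hone p).2] using (hcoc p p⁻¹ p).symm

theorem twistedAction_apply_inv_apply
    (hcov : ∀ s t : G, ∀ a : A, α s (α t a) = u s t * α (s * t) a * star (u s t))
    (hu₁₁ : u 1 1 = 1) {p : G} (hp : u p p⁻¹ = 1) (a : A) : α p (α p⁻¹ a) = a := by
  rw [hcov, hp, mul_inv_cancel, twistedAction_one_apply hcov hu₁₁, star_one, one_mul, mul_one]

theorem twistedAction_cocycle_mul_cocycle_inv_mul
    (hcoc : ∀ r s t : G, α r (u s t) * u r (s * t) = u r s * u (r * s) t)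
    (hu₁ : ∀ s : G, u 1 s = 1) {p : G} (hp : u p p⁻¹ = 1) (s : G) :
    α p (u p⁻¹ s) * u p (p⁻¹ * s) = 1 := by
  rw [hcoc, hp, mul_inv_cancel, hu₁, one_mul]

theorem twistedAction_compression_coeff_eq
    (hcov : ∀ s t : G, ∀ a : A, α s (α t a) = u s t * α (s * t) a * star (u s t))
    (hcoc : ∀ r s t : G, α r (u s t) * u r (s * t) = u r s * u (r * s) t)
    (hone : ∀ s : G, u 1 s = 1 ∧ u s 1 = 1) (hu1 : ∀ s : G, u s⁻¹ s = 1) (a : A) (p s : G) :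
    α p (α p⁻¹ a * u p⁻¹ s) * u p (s⁻¹ * p)⁻¹ = a := by
  have hp := cocycle_mul_inv_eq_one hcoc hone hu1 p
  have hu₁ : ∀ s : G, u 1 s = 1 := fun s => (hone s).1
  rw [mul_inv_rev, inv_inv, map_mul, mul_assoc,
    twistedAction_cocycle_mul_cocycle_inv_mul hcoc hu₁ hp, mul_one,
    twistedAction_apply_inv_apply hcov (hu₁ 1) hp]

end TwistedAction

theorem stmt6_general {A : Type*} [CStarAlgebra A] {G : Type*} [Group G] [DecidableEq G]
    {H₀ : Type*} [NormedAddCommGroup H₀] [InnerProductSpace ℂ H₀]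
    (α : G → (A ≃⋆ₐ[ℂ] A)) (u : G → G → A)
    (hcov : ∀ s t : G, ∀ a : A, α s (α t a) = u s t * α (s * t) a * star (u s t))
    (hcoc : ∀ r s t : G, α r (u s t) * u r (s * t) = u r s * u (r * s) t)
    (hone : ∀ s : G, u 1 s = 1 ∧ u s 1 = 1)
    (π : A → (lp (fun _ : G => H₀) 2 →L[ℂ] lp (fun _ : G => H₀) 2))
    (Λu : G → (lp (fun _ : G => H₀) 2 →L[ℂ] lp (fun _ : G => H₀) 2))
    (hu1 : ∀ s : G, u s⁻¹ s = 1)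
    (F : Finset G) :
    ∀ (a : A) (s : G),
      (∑ p ∈ F ∩ F.image (fun t => s * t), ((F.card : ℂ))⁻¹ •
          (π (α p (α p⁻¹ a * u p⁻¹ s) * u p (s⁻¹ * p)⁻¹) * Λu (p * (s⁻¹ * p)⁻¹)))
        = (((F ∩ F.image (fun t => s * t)).card : ℂ) / (F.card : ℂ)) • (π a * Λu s) := by
  intro a s
  have hsummand : ∀ p : G,
      ((F.card : ℂ))⁻¹ • (π (α p (α p⁻¹ a * u p⁻¹ s) * u p (s⁻¹ * p)⁻¹) * Λu (p * (s⁻¹ * p)⁻¹))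
        = ((F.card : ℂ))⁻¹ • (π a * Λu s) := fun p => by
    rw [twistedAction_compression_coeff_eq hcov hcoc hone hu1, mul_inv_rev, inv_inv,
      mul_inv_cancel_left]
  simp only [hsummand, Finset.sum_const, ← Nat.cast_smul_eq_nsmul ℂ, smul_smul, div_eq_mul_inv]

/-- Let `(A, G, α, u)` be a twisted C*-dynamical system with `u(s⁻¹,s) = 1`, realized on
`ℓ²(G, H₀)` via the regular covariant pair `(π, Λu)`, and `F ⊆ G` a nonempty finite set.
With `φ` the compression by `1 ⊗ P_F` (so that `φ(π(a)Λu(s)) = Σ_{p ∈ F ∩ sF}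
α_{p⁻¹}(a)u(p⁻¹,s) ⊗ e_{p,s⁻¹p}`) and `ψ(a ⊗ e_{p,q}) = (1/|F|) π(α_p(a)u(p,q⁻¹))Λu(pq⁻¹)`,
we have `ψ(φ(π(a)Λu(s))) = (|F ∩ sF|/|F|) · π(a)Λu(s)` for all `a ∈ A`, `s ∈ G`. -/
theorem stmt6 {A : Type*} [CStarAlgebra A] {G : Type*} [Group G] [DecidableEq G]
    {H₀ : Type*} [NormedAddCommGroup H₀] [InnerProductSpace ℂ H₀] [CompleteSpace H₀]
    (ρ : A →⋆ₐ[ℂ] (H₀ →L[ℂ] H₀)) (hρ : Function.Injective ρ)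
    (α : G → (A ≃⋆ₐ[ℂ] A)) (u : G → G → A)
    (hu : ∀ s t : G, u s t ∈ unitary A)
    (hcov : ∀ s t : G, ∀ a : A, α s (α t a) = u s t * α (s * t) a * star (u s t))
    (hcoc : ∀ r s t : G, α r (u s t) * u r (s * t) = u r s * u (r * s) t)
    (hone : ∀ s : G, u 1 s = 1 ∧ u s 1 = 1)
    (π : A → (lp (fun _ : G => H₀) 2 →L[ℂ] lp (fun _ : G => H₀) 2))
    (Λu : G → (lp (fun _ : G => H₀) 2 →L[ℂ] lp (fun _ : G => H₀) 2))
    (hπ : ∀ (x : A) (ξ : lp (fun _ : G => H₀) 2) (l : G),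
      (π x ξ) l = ρ (α l⁻¹ x) (ξ l))
    (hLam : ∀ (s : G) (ξ : lp (fun _ : G => H₀) 2) (l : G),
      (Λu s ξ) l = ρ (u l⁻¹ s) (ξ (s⁻¹ * l)))
    (hΛunit : ∀ s : G, Λu s ∈ unitary (lp (fun _ : G => H₀) 2 →L[ℂ] lp (fun _ : G => H₀) 2))
    (hu1 : ∀ s : G, u s⁻¹ s = 1)
    (F : Finset G) (hF : F.Nonempty) :
    ∀ (a : A) (s : G),
      (∑ p ∈ F ∩ F.image (fun t => s * t), ((F.card : ℂ))⁻¹ •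
          (π (α p (α p⁻¹ a * u p⁻¹ s) * u p (s⁻¹ * p)⁻¹) * Λu (p * (s⁻¹ * p)⁻¹)))
        = (((F ∩ F.image (fun t => s * t)).card : ℂ) / (F.card : ℂ)) • (π a * Λu s) :=
  stmt6_general α u hcov hcoc hone π Λu hu1 F
end
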